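/- Let C₁ be the n×n circulant matrix Circ(𝔽_0, 𝔽_1, …, 𝔽_{n−1}) for n ≥ 1. Its spectral norm equals ∑_{k=0}^{n−1} 𝔽_k, which equals n·𝔽_n − ∑_{k=0}^{n−1} (k+1)/F_{k+1}. -/

import Mathlib

open Finset

noncomputable def harmFib (n : ℕ) : ℝ := ∑ k ∈ Finset.Icc 1 n, (1 : ℝ) / Nat.fib k

open scoped Matrix.Norms.L2Operator

/-!
The matrix is entrywise nonnegative and, being circulant, has every row and every column sum
equal to `s = ∑_{k<n} 𝔽_k`. The all-ones vector is mapped to `s` times itself, so `s ≤ ‖C₁‖`;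
conversely the Schur test (Cauchy–Schwarz in each row) bounds the spectral norm of a nonnegative
matrix by the square root of (maximal row sum) · (maximal column sum), which is `s` here.
The closed form for `s` is summation by parts.
-/

namespace Matrix

theorem sq_dotProduct_le_sum_mul_sum {n : Type*} [Fintype n] {v : n → ℝ} (hv : ∀ j, 0 ≤ v j)
    (x : n → ℝ) : (v ⬝ᵥ x) ^ 2 ≤ (∑ j, v j) * ∑ j, v j * x j ^ 2 :=
  sum_sq_le_sum_mul_sum_of_sq_le_mul _ (fun j _ => hv j)
    (fun j _ => mul_nonneg (hv j) (sq_nonneg _)) fun j _ => (by ring : _ = _).le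

variable {m n : Type*} [Fintype m] [Fintype n] [DecidableEq n]

theorem l2_opNorm_le_sqrt_mul_of_sum_le (A : Matrix m n ℝ) (hA : ∀ i j, 0 ≤ A i j) {r c : ℝ}
    (hr : 0 ≤ r) (hrow : ∀ i, ∑ j, A i j ≤ r) (hcol : ∀ j, ∑ i, A i j ≤ c) :
    ‖A‖ ≤ √(r * c) := by
  rw [l2_opNorm_def]
  refine ContinuousLinearMap.opNorm_le_bound _ (Real.sqrt_nonneg _) fun x => ?_
  rw [← Real.sqrt_sq (norm_nonneg x), ← Real.sqrt_mul' _ (sq_nonneg _),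
    ← Real.sqrt_sq (norm_nonneg _)]
  refine Real.sqrt_le_sqrt ?_
  have hx : ‖x‖ ^ 2 = ∑ j, x j ^ 2 := by simp [EuclideanSpace.norm_sq_eq]
  have hAx : ‖(EuclideanSpace.equiv m ℝ).symm (A *ᵥ x)‖ ^ 2 = ∑ i, (A *ᵥ x) i ^ 2 := by
    simp [EuclideanSpace.norm_sq_eq]
  change ‖(EuclideanSpace.equiv m ℝ).symm (A *ᵥ x)‖ ^ 2 ≤ _
  rw [hAx, hx]
  calc ∑ i, (A *ᵥ x) i ^ 2 ≤ ∑ i, r * ∑ j, A i j * x j ^ 2 := by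
        gcongr with i
        exact (sq_dotProduct_le_sum_mul_sum (hA i) x).trans <| by
          gcongr
          · exact sum_nonneg fun j _ => mul_nonneg (hA i j) (sq_nonneg _)
          · exact hrow i
    _ = r * ∑ j, (∑ i, A i j) * x j ^ 2 := by
        rw [← mul_sum, sum_comm]; simp_rw [sum_mul]
    _ ≤ r * ∑ j, c * x j ^ 2 := by gcongr with j; exact hcol j
    _ = r * c * ∑ j, x j ^ 2 := by rw [← mul_sum, mul_assoc]

theorem abs_le_l2_opNorm_of_sum_eq [Nonempty n] (A : Matrix n n ℝ) {s : ℝ}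
    (hrow : ∀ i, ∑ j, A i j = s) : |s| ≤ ‖A‖ := by
  set x : EuclideanSpace ℝ n := (EuclideanSpace.equiv n ℝ).symm fun _ => 1
  have hAx : (EuclideanSpace.equiv n ℝ).symm (A *ᵥ x) = s • x := by
    ext i; simp [x, mulVec, dotProduct, hrow]
  have hx : 0 < ‖x‖ := norm_pos_iff.2 fun h => by simpa [x] using congr($h (Classical.arbitrary n))
  have := A.l2_opNorm_mulVec x
  rw [hAx, norm_smul, Real.norm_eq_abs] at this
  exact le_of_mul_le_mul_right this hx

end Matrix

theorem harmFib_nonneg (n : ℕ) : 0 ≤ harmFib n :=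
  sum_nonneg fun _ _ => by positivity

theorem harmFib_succ (n : ℕ) : harmFib (n + 1) = harmFib n + 1 / Nat.fib (n + 1) :=
  sum_Icc_succ_top (by omega) _

theorem sum_range_harmFib (n : ℕ) :
    ∑ k ∈ range n, harmFib k = n * harmFib n - ∑ k ∈ range n, (k + 1 : ℝ) / Nat.fib (k + 1) := by
  induction n with
  | zero => simp
  | succ n ih =>
    have hfib : (Nat.fib (n + 1) : ℝ) ≠ 0 := by exact_mod_cast (Nat.fib_pos.2 n.succ_pos).ne'
    rw [sum_range_succ, sum_range_succ, ih, harmFib_succ]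
    push_cast
    field_simp
    ring

theorem stmt_12 (n : ℕ) (hn : 1 ≤ n) :
    ‖(Matrix.of (fun i j : Fin n => harmFib ((j - i : Fin n) : ℕ)) : Matrix (Fin n) (Fin n) ℝ)‖ =
        ∑ k ∈ Finset.range n, harmFib k ∧
      ∑ k ∈ Finset.range n, harmFib k =
        n * harmFib n - ∑ k ∈ Finset.range n, (k + 1 : ℝ) / Nat.fib (k + 1) := by
  have : NeZero n := ⟨by omega⟩
  set s := ∑ k ∈ range n, harmFib k
  have hs : ∑ k : Fin n, harmFib k = s := Fin.sum_univ_eq_sum_range harmFib n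
  have hs0 : 0 ≤ s := sum_nonneg fun k _ => harmFib_nonneg k
  have hrow (i : Fin n) : ∑ j : Fin n, harmFib ((j - i : Fin n) : ℕ) = s :=
    ((Equiv.subRight i).sum_comp fun k : Fin n => harmFib k).trans hs
  have hcol (j : Fin n) : ∑ i : Fin n, harmFib ((j - i : Fin n) : ℕ) = s :=
    ((Equiv.subLeft j).sum_comp fun k : Fin n => harmFib k).trans hs
  refine ⟨le_antisymm ?_ ?_, sum_range_harmFib n⟩
  · calc _ ≤ √(s * s) := Matrix.l2_opNorm_le_sqrt_mul_of_sum_le _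
          (fun _ _ => harmFib_nonneg _) hs0 (fun i => (hrow i).le) (fun j => (hcol j).le)
      _ = s := Real.sqrt_mul_self hs0
  · calc s = |s| := (abs_of_nonneg hs0).symm
      _ ≤ _ := Matrix.abs_le_l2_opNorm_of_sum_eq _ hrow
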